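/- arXiv:2310.08969 — 3 statements merged into one kernel-verified Lean document; each statement's English description precedes it below -/
import Mathlib

section
/- Invariance principle for the modified nonlinear Schrödinger subproblem: Let d ≥ 1, let V ∈ C²(ℝ^d, ℝ), let ϑ, β₁, β₂ ∈ ℝ and τ > 0. Suppose ψ : ℝ^d × [0, τ] → ℂ is jointly of class C³ and satisfies the evolution equation ∂ₜψ(x,t) = − i · f(ψ(·,t))(x) · ψ(x,t) for all (x,t) ∈ ℝ^d × [0, τ]. Then f(ψ(·,t))(x) = f(ψ(·,0))(x) for all x ∈ ℝ^d and all t ∈ [0, τ]. -/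
/-!
The density `ρ = |ψ|²` is conserved pointwise, since `∂ₜρ = 2 Re(ψ̄ ∂ₜψ) = 2 Re(−i f(ψ) ρ) = 0`.
And `f(v)` depends on `v` only through `ρ = |v|²`: from `Δρ = 2 Re(v̄Δv) + 2 ∇v̄·∇v` and
`|v|² ∇v̄·∇v + Re(v̄² ∇v·∇v) = |∇ρ|²/2` one gets `g₆(v) = ρ ΔV + ϑ (ρ Δρ + |∇ρ|²/2)`.
-/

open Complex

/-- `j`-th partial derivative of a complex-valued function on `ℝ^d`. -/
noncomputable def pdC {d : ℕ} (j : Fin d) (w : (Fin d → ℝ) → ℂ) (x : Fin d → ℝ) : ℂ :=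
  fderiv ℝ w x (Pi.single j 1)

/-- Laplacian of a complex-valued function on `ℝ^d`. -/
noncomputable def lapC {d : ℕ} (w : (Fin d → ℝ) → ℂ) (x : Fin d → ℝ) : ℂ :=
  ∑ j, pdC j (fun y => pdC j w y) x

/-- Gradient dot product `∇w·∇z` of complex-valued functions on `ℝ^d`. -/
noncomputable def gdotC {d : ℕ} (w z : (Fin d → ℝ) → ℂ) (x : Fin d → ℝ) : ℂ :=
  ∑ j, pdC j w x * pdC j z x

/-- `j`-th partial derivative of a real-valued function on `ℝ^d`. -/
noncomputable def pdR {d : ℕ} (j : Fin d) (w : (Fin d → ℝ) → ℝ) (x : Fin d → ℝ) : ℝ :=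
  fderiv ℝ w x (Pi.single j 1)

/-- Laplacian of a real-valued function on `ℝ^d`. -/
noncomputable def lapR {d : ℕ} (w : (Fin d → ℝ) → ℝ) (x : Fin d → ℝ) : ℝ :=
  ∑ j, pdR j (fun y => pdR j w y) x

/-- Gradient dot product `∇w·∇z` of real-valued functions on `ℝ^d`. -/
noncomputable def gdotR {d : ℕ} (w z : (Fin d → ℝ) → ℝ) (x : Fin d → ℝ) : ℝ :=
  ∑ j, pdR j w x * pdR j z x

/-- The modified potential
`f(v) = β₁ (V + ϑ|v|²) + β₂ τ² (2|∇V|² − 4ϑ g₆(v))` with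
`g₆(v) = |v|²(ΔV + ϑ(2 Re(v̄Δv) + 3 ∇v̄·∇v)) + ϑ Re(v̄² ∇v·∇v)`. -/
noncomputable def modf {d : ℕ} (V : (Fin d → ℝ) → ℝ) (ϑ β₁ β₂ τ : ℝ)
    (v : (Fin d → ℝ) → ℂ) (x : Fin d → ℝ) : ℝ :=
  let g1 : ℝ := Complex.normSq (v x)
  let g2 : ℝ := ((starRingEnd ℂ) (v x) * lapC v x).re
  let g3 : ℝ := (gdotC (fun y => (starRingEnd ℂ) (v y)) v x).re
  let g4 : ℝ := (((starRingEnd ℂ) (v x)) ^ 2 * gdotC v v x).re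
  let g5 : ℝ := ϑ * (2 * g2 + 3 * g3)
  let g6 : ℝ := g1 * (lapR V x + g5) + ϑ * g4
  let f1 : ℝ := V x + ϑ * g1
  let f2 : ℝ := 2 * gdotR V V x - 4 * ϑ * g6
  β₁ * f1 + β₂ * τ ^ 2 * f2

open ComplexConjugate
open scoped InnerProductSpace

noncomputable def modfOfDensity {d : ℕ} (V : (Fin d → ℝ) → ℝ) (ϑ β₁ β₂ τ : ℝ)
    (ρ : (Fin d → ℝ) → ℝ) (x : Fin d → ℝ) : ℝ :=
  β₁ * (V x + ϑ * ρ x) + β₂ * τ ^ 2 * (2 * gdotR V V x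
    - 4 * ϑ * (ρ x * lapR V x + ϑ * (ρ x * lapR ρ x + gdotR ρ ρ x / 2)))

section Derivatives

variable {d : ℕ} {v w : (Fin d → ℝ) → ℂ} {x : Fin d → ℝ}

lemma pdC_conj (j : Fin d) (hv : DifferentiableAt ℝ v x) :
    pdC j (fun y => conj (v y)) x = conj (pdC j v x) := by
  have hconj : fderiv ℝ (fun y => conj (v y)) x
      = conjCLE.toContinuousLinearMap.comp (fderiv ℝ v x) :=
    (conjCLE.toContinuousLinearMap.hasFDerivAt.comp x hv.hasFDerivAt).fderiv
  unfold pdC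
  rw [hconj]
  rfl

lemma pdR_inner (j : Fin d) (hv : DifferentiableAt ℝ v x) (hw : DifferentiableAt ℝ w x) :
    pdR j (fun y => ⟪v y, w y⟫_ℝ) x = ⟪v x, pdC j w x⟫_ℝ + ⟪pdC j v x, w x⟫_ℝ :=
  fderiv_inner_apply ℝ hv hw _

lemma differentiable_pdC (j : Fin d) (hv : ContDiff ℝ 2 v) :
    Differentiable ℝ (fun y => pdC j v y) :=
  ((hv.fderiv_right (m := 1) (by norm_num)).clm_apply contDiff_const).differentiable (by norm_num)

lemma pdR_normSq (j : Fin d) (hv : DifferentiableAt ℝ v x) :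
    pdR j (fun y => normSq (v y)) x = 2 * ⟪v x, pdC j v x⟫_ℝ := by
  have hρ : (fun y => normSq (v y)) = fun y => ⟪v y, v y⟫_ℝ := by
    funext y
    rw [normSq_eq_norm_sq, real_inner_self_eq_norm_sq]
  rw [hρ, pdR_inner j hv hv, real_inner_comm]
  ring

lemma lapR_normSq (hv : ContDiff ℝ 2 v) (x : Fin d → ℝ) :
    lapR (fun y => normSq (v y)) x
      = ∑ j, 2 * (‖pdC j v x‖ ^ 2 + ⟪v x, pdC j (fun y => pdC j v y) x⟫_ℝ) := by
  have hv1 : Differentiable ℝ v := hv.differentiable (by norm_num)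
  refine Finset.sum_congr rfl fun j _ => ?_
  have hρj : (fun y => pdR j (fun y => normSq (v y)) y) = fun y => 2 * ⟪v y, pdC j v y⟫_ℝ :=
    funext fun y => pdR_normSq j (hv1 y)
  have hinner := pdR_inner j (hv1 x) (differentiable_pdC j hv x)
  rw [hρj]
  unfold pdR at hinner ⊢
  rw [fderiv_const_mul ((hv1 x).inner ℝ (differentiable_pdC j hv x)),
    smul_apply, hinner, real_inner_self_eq_norm_sq, smul_eq_mul]
  ring

end Derivatives

-- `|w|² + Re(w²) = 2 (Re w)²` for `w = conj A * B`.
lemma normSq_mul_add_re_conj_sq (A B C : ℂ) :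
    normSq A * (2 * (conj A * C).re + 3 * (conj B * B).re) + (conj A ^ 2 * (B * B)).re
      = normSq A * (2 * (‖B‖ ^ 2 + ⟪A, C⟫_ℝ)) + (2 * ⟪A, B⟫_ℝ) ^ 2 / 2 := by
  rw [Complex.sq_norm]
  simp only [Complex.inner, normSq_apply, mul_re, mul_im, conj_re, conj_im, pow_two]
  ring

lemma modf_eq_modfOfDensity {d : ℕ} (V : (Fin d → ℝ) → ℝ) (ϑ β₁ β₂ τ : ℝ)
    {v : (Fin d → ℝ) → ℂ} (hv : ContDiff ℝ 2 v) (x : Fin d → ℝ) :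
    modf V ϑ β₁ β₂ τ v x = modfOfDensity V ϑ β₁ β₂ τ (fun y => normSq (v y)) x := by
  have hv1 : Differentiable ℝ v := hv.differentiable (by norm_num)
  have hgrad : gdotR (fun y => normSq (v y)) (fun y => normSq (v y)) x
      = ∑ j, (2 * ⟪v x, pdC j v x⟫_ℝ) ^ 2 :=
    Finset.sum_congr rfl fun j _ => by rw [pdR_normSq j (hv1 x), sq]
  have hconj : gdotC (fun y => conj (v y)) v x = ∑ j, conj (pdC j v x) * pdC j v x :=
    Finset.sum_congr rfl fun j _ => by rw [pdC_conj j (hv1 x)]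
  have key : normSq (v x) * (2 * (conj (v x) * lapC v x).re
        + 3 * (gdotC (fun y => conj (v y)) v x).re) + (conj (v x) ^ 2 * gdotC v v x).re
      = normSq (v x) * lapR (fun y => normSq (v y)) x
        + gdotR (fun y => normSq (v y)) (fun y => normSq (v y)) x / 2 := by
    rw [lapR_normSq hv, hgrad, hconj, lapC, gdotC]
    calc _ = ∑ j, (normSq (v x) * (2 * (conj (v x) * pdC j (fun y => pdC j v y) x).re
              + 3 * (conj (pdC j v x) * pdC j v x).re)
              + (conj (v x) ^ 2 * (pdC j v x * pdC j v x)).re) := by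
          simp only [Finset.mul_sum, re_sum, Finset.sum_add_distrib, mul_add]
      _ = ∑ j, (normSq (v x) * (2 * (‖pdC j v x‖ ^ 2 + ⟪v x, pdC j (fun y => pdC j v y) x⟫_ℝ))
              + (2 * ⟪v x, pdC j v x⟫_ℝ) ^ 2 / 2) :=
          Finset.sum_congr rfl fun j _ => normSq_mul_add_re_conj_sq _ _ _
      _ = _ := by simp only [Finset.mul_sum, Finset.sum_add_distrib, Finset.sum_div]
  unfold modf modfOfDensity
  linear_combination (-4 * β₂ * τ ^ 2 * ϑ ^ 2) * key

lemma normSq_eq_of_hasDerivWithinAt_neg_I_mul {u : ℝ → ℂ} {c : ℝ → ℝ} {a b : ℝ}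
    (hu : ∀ s ∈ Set.Icc a b, HasDerivWithinAt u (-I * c s * u s) (Set.Icc a b) s) :
    ∀ t ∈ Set.Icc a b, normSq (u t) = normSq (u a) := by
  have hderiv : ∀ s ∈ Set.Icc a b, HasDerivWithinAt (fun s => ‖u s‖ ^ 2) 0 (Set.Icc a b) s := by
    intro s hs
    convert (hu s hs).norm_sq using 1
    simp only [Complex.inner, mul_re, mul_im, neg_re, neg_im, I_re, I_im, ofReal_re, ofReal_im,
      conj_re, conj_im]
    ring
  have hconst := constant_of_has_deriv_right_zero (fun s hs => (hderiv s hs).continuousWithinAt)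
    fun s hs => (hderiv s (Set.Ico_subset_Icc_self hs)).mono_of_mem_nhdsWithin
      (Icc_mem_nhdsGE_of_mem hs)
  simpa only [normSq_eq_norm_sq] using hconst

lemma ContDiffOn.contDiff_slice {𝕜 E F G : Type*} [NontriviallyNormedField 𝕜]
    [NormedAddCommGroup E] [NormedSpace 𝕜 E] [NormedAddCommGroup F] [NormedSpace 𝕜 F]
    [NormedAddCommGroup G] [NormedSpace 𝕜 G] {n : WithTop ℕ∞} {f : E × F → G} {T : Set F}
    (hf : ContDiffOn 𝕜 n f (Set.univ ×ˢ T)) {s : F} (hs : s ∈ T) :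
    ContDiff 𝕜 n fun y => f (y, s) :=
  contDiffOn_univ.mp <| hf.comp (contDiff_id.prodMk contDiff_const).contDiffOn
    fun _ _ => ⟨trivial, hs⟩

theorem invariance_principle_general {d : ℕ}
    (V : (Fin d → ℝ) → ℝ)
    (ϑ β₁ β₂ τ : ℝ)
    (ψ : (Fin d → ℝ) → ℝ → ℂ)
    (hψ : ContDiffOn ℝ 3 (fun p : (Fin d → ℝ) × ℝ => ψ p.1 p.2)
      (Set.univ ×ˢ Set.Icc 0 τ))
    (heq : ∀ (x : Fin d → ℝ), ∀ t ∈ Set.Icc (0 : ℝ) τ,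
      HasDerivWithinAt (fun s => ψ x s)
        (- Complex.I * (modf V ϑ β₁ β₂ τ (fun y => ψ y t) x : ℂ) * ψ x t)
        (Set.Icc 0 τ) t) :
    ∀ (x : Fin d → ℝ), ∀ t ∈ Set.Icc (0 : ℝ) τ,
      modf V ϑ β₁ β₂ τ (fun y => ψ y t) x = modf V ϑ β₁ β₂ τ (fun y => ψ y 0) x := by
  intro x t ht
  have hslice : ∀ s ∈ Set.Icc (0 : ℝ) τ, ContDiff ℝ 2 fun y => ψ y s := fun s hs =>
    (hψ.contDiff_slice hs).of_le (by norm_num)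
  have h0 : (0 : ℝ) ∈ Set.Icc 0 τ := ⟨le_rfl, ht.1.trans ht.2⟩
  have hdensity : (fun y => normSq (ψ y t)) = fun y => normSq (ψ y 0) := funext fun y =>
    normSq_eq_of_hasDerivWithinAt_neg_I_mul
      (c := fun s => modf V ϑ β₁ β₂ τ (fun y => ψ y s) y) (heq y) t ht
  rw [modf_eq_modfOfDensity V ϑ β₁ β₂ τ (hslice t ht),
    modf_eq_modfOfDensity V ϑ β₁ β₂ τ (hslice 0 h0), hdensity]

/-- **Invariance principle** for the modified nonlinear Schrödinger subproblem:
if `∂ₜψ = − i f(ψ(·,t)) ψ` on `ℝ^d × [0,τ]`, then `f(ψ(·,t)) = f(ψ(·,0))`. -/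
theorem invariance_principle {d : ℕ} (hd : 1 ≤ d)
    (V : (Fin d → ℝ) → ℝ) (hV : ContDiff ℝ 2 V)
    (ϑ β₁ β₂ τ : ℝ) (hτ : 0 < τ)
    (ψ : (Fin d → ℝ) → ℝ → ℂ)
    (hψ : ContDiffOn ℝ 3 (fun p : (Fin d → ℝ) × ℝ => ψ p.1 p.2)
      (Set.univ ×ˢ Set.Icc 0 τ))
    (heq : ∀ (x : Fin d → ℝ), ∀ t ∈ Set.Icc (0 : ℝ) τ,
      HasDerivWithinAt (fun s => ψ x s)
        (- Complex.I * (modf V ϑ β₁ β₂ τ (fun y => ψ y t) x : ℂ) * ψ x t)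
        (Set.Icc 0 τ) t) :
    ∀ (x : Fin d → ℝ), ∀ t ∈ Set.Icc (0 : ℝ) τ,
      modf V ϑ β₁ β₂ τ (fun y => ψ y t) x = modf V ϑ β₁ β₂ τ (fun y => ψ y 0) x :=
  invariance_principle_general V ϑ β₁ β₂ τ ψ hψ heq
end

section
/- Fourth-order splitting of a modified matrix exponential: Let M ≥ 1 and let B, C be complex M × M matrices. Then there exist constants K ≥ 0 and δ > 0 such that for all τ ∈ ℝ with |τ| ≤ δ, ‖ exp(τ(B + τ² C)) − exp((τ/2) B) · exp(τ³ C) · exp((τ/2) B) ‖ ≤ K |τ|⁵, where exp denotes the matrix exponential and ‖·‖ a (sub-multiplicative) matrix norm. -/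
attribute [local instance] Matrix.linftyOpNormedRing Matrix.linftyOpNormedAlgebra

open NormedSpace

/-!
Put `a = (τ/2) B` and `g = τ³ C`, so that the exponent is `2a + g` with `‖a‖ = O(τ)` and
`‖g‖ = O(τ³)`. Both sides agree with `exp(2a) + g + ag + ga` up to `O(‖g‖ (‖a‖² + ‖g‖)) = O(τ⁵)`:
for `exp(2a + g)` this is the first-order perturbation of the exponential series, controlled by
`‖(x + y)ᵏ - xᵏ‖ ≤ k ‖y‖ (‖x‖ + ‖y‖)ᵏ⁻¹`; for `exp a exp g exp a` it follows from
`exp g = 1 + g + O(‖g‖²)` and `exp a = 1 + a + O(‖a‖²)`.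
-/

open Finset Nat

theorem Rat.norm_natCast (m : ℕ) : ‖(m : ℚ)‖ = m := by
  rw [← Rat.norm_cast_real, Rat.cast_natCast, Real.norm_natCast]

theorem Real.hasSum_pow_div_factorial (r : ℝ) :
    HasSum (fun k ↦ r ^ k / k !) (Real.exp r) := by
  simpa [Real.exp_eq_exp_ℝ] using expSeries_div_hasSum_exp r

namespace NormedSpace

variable {A : Type*} [NormedRing A]

theorem norm_add_pow_succ_sub_pow_succ_le (x y : A) (k : ℕ) :
    ‖(x + y) ^ (k + 1) - x ^ (k + 1)‖ ≤ (k + 1) * ‖y‖ * (‖x‖ + ‖y‖) ^ k := by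
  induction k with
  | zero => simp
  | succ k ih =>
    have hsplit : (x + y) ^ (k + 2) - x ^ (k + 2)
        = ((x + y) ^ (k + 1) - x ^ (k + 1)) * (x + y) + x ^ (k + 1) * y := by
      rw [pow_succ _ (k + 1), pow_succ x (k + 1)]; noncomm_ring
    have hx : ‖x ^ (k + 1)‖ ≤ (‖x‖ + ‖y‖) ^ (k + 1) :=
      (norm_pow_le' x k.succ_pos).trans (by gcongr; exact le_add_of_nonneg_right (norm_nonneg y))
    calc ‖(x + y) ^ (k + 2) - x ^ (k + 2)‖
        ≤ ‖(x + y) ^ (k + 1) - x ^ (k + 1)‖ * ‖x + y‖ + ‖x ^ (k + 1)‖ * ‖y‖ := by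
          rw [hsplit]
          exact (norm_add_le _ _).trans (add_le_add (norm_mul_le _ _) (norm_mul_le _ _))
      _ ≤ (k + 1) * ‖y‖ * (‖x‖ + ‖y‖) ^ k * (‖x‖ + ‖y‖) + (‖x‖ + ‖y‖) ^ (k + 1) * ‖y‖ := by
          gcongr; exact norm_add_le x y
      _ = (↑(k + 1) + 1) * ‖y‖ * (‖x‖ + ‖y‖) ^ (k + 1) := by push_cast; ring

variable [NormedAlgebra ℚ A]

noncomputable def expTail (n : ℕ) (x : A) : A :=
  ∑' k, ((k + n)! : ℚ)⁻¹ • x ^ (k + n)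

theorem norm_expTail_le [NormOneClass A] (n : ℕ) (x : A) :
    ‖expTail n x‖ ≤ ‖x‖ ^ n * Real.exp ‖x‖ := by
  refine tsum_of_norm_bounded ((Real.hasSum_pow_div_factorial ‖x‖).mul_left (‖x‖ ^ n)) fun k ↦ ?_
  have hfact : (k ! : ℝ) ≤ (k + n)! := by exact_mod_cast factorial_le (le_add_right k n)
  calc ‖((k + n)! : ℚ)⁻¹ • x ^ (k + n)‖ ≤ ((k + n)! : ℝ)⁻¹ * ‖x‖ ^ (k + n) := by
        rw [norm_smul, norm_inv, Rat.norm_natCast]; gcongr; exact norm_pow_le x _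
    _ ≤ (k ! : ℝ)⁻¹ * ‖x‖ ^ (k + n) := by gcongr
    _ = ‖x‖ ^ n * (‖x‖ ^ k / k !) := by ring

variable [CompleteSpace A]

theorem summable_expTail (n : ℕ) (x : A) : Summable fun k ↦ ((k + n)! : ℚ)⁻¹ • x ^ (k + n) :=
  (summable_nat_add_iff (f := fun k ↦ (k ! : ℚ)⁻¹ • x ^ k) n).mpr (expSeries_summable' x)

theorem exp_eq_sum_range_add_expTail (n : ℕ) (x : A) :
    exp x = ∑ k ∈ range n, (k ! : ℚ)⁻¹ • x ^ k + expTail n x := by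
  rw [exp_eq_tsum_rat, expTail, (expSeries_summable' (𝕂 := ℚ) x).sum_add_tsum_nat_add]

theorem exp_eq_one_add_add_expTail_two (x : A) : exp x = 1 + x + expTail 2 x := by
  simp [exp_eq_sum_range_add_expTail 2, sum_range_succ]

theorem exp_eq_one_add_add_half_sq_add_expTail_three (x : A) :
    exp x = 1 + x + (2 : ℚ)⁻¹ • x ^ 2 + expTail 3 x := by
  simp [exp_eq_sum_range_add_expTail 3, sum_range_succ]

theorem norm_expTail_add_sub_expTail_le (n : ℕ) (x y : A) :
    ‖expTail (n + 1) (x + y) - expTail (n + 1) x‖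
      ≤ ‖y‖ * (‖x‖ + ‖y‖) ^ n * Real.exp (‖x‖ + ‖y‖) := by
  rw [expTail, expTail, ← (summable_expTail _ (x + y)).tsum_sub (summable_expTail _ x)]
  refine tsum_of_norm_bounded
    ((Real.hasSum_pow_div_factorial (‖x‖ + ‖y‖)).mul_left (‖y‖ * (‖x‖ + ‖y‖) ^ n)) fun k ↦ ?_
  set s := ‖x‖ + ‖y‖
  have hfact : (k ! : ℝ) ≤ (k + n)! := by exact_mod_cast factorial_le (le_add_right k n)
  calc _ = ((k + n + 1)! : ℝ)⁻¹ * ‖(x + y) ^ (k + n + 1) - x ^ (k + n + 1)‖ := by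
        rw [← smul_sub, norm_smul, norm_inv, Rat.norm_natCast, ← add_assoc]
    _ ≤ ((k + n + 1)! : ℝ)⁻¹ * ((↑(k + n) + 1) * ‖y‖ * s ^ (k + n)) := by
        gcongr; exact norm_add_pow_succ_sub_pow_succ_le x y (k + n)
    _ = ((k + n)! : ℝ)⁻¹ * ‖y‖ * s ^ (k + n) := by
        rw [factorial_succ]; push_cast; field_simp
    _ ≤ (k ! : ℝ)⁻¹ * ‖y‖ * s ^ (k + n) := by gcongr
    _ = ‖y‖ * s ^ n * (s ^ k / k !) := by ring

theorem norm_exp_le_exp_norm [NormOneClass A] (x : A) : ‖exp x‖ ≤ Real.exp ‖x‖ := by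
  simpa [exp_eq_sum_range_add_expTail 0] using norm_expTail_le 0 x

theorem norm_exp_mul_mul_exp_sub_le [NormOneClass A] (x y : A) :
    ‖exp x * y * exp x - (y + x * y + y * x)‖ ≤ 3 * ‖x‖ ^ 2 * ‖y‖ * Real.exp (2 * ‖x‖) := by
  set r := expTail 2 x
  have hid : exp x * y * exp x - (y + x * y + y * x)
      = x * y * x + r * y * exp x + (1 + x) * y * r := by
    rw [exp_eq_one_add_add_expTail_two x]; noncomm_ring
  have hr : ‖r‖ ≤ ‖x‖ ^ 2 * Real.exp ‖x‖ := norm_expTail_le 2 x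
  have h1x : ‖1 + x‖ ≤ Real.exp ‖x‖ :=
    (norm_add_le _ _).trans (by rw [norm_one, add_comm]; exact Real.add_one_le_exp _)
  have hE : 1 ≤ Real.exp ‖x‖ := Real.one_le_exp (norm_nonneg x)
  rw [hid]
  calc ‖x * y * x + r * y * exp x + (1 + x) * y * r‖
      ≤ ‖x‖ * ‖y‖ * ‖x‖ + ‖x‖ ^ 2 * Real.exp ‖x‖ * ‖y‖ * Real.exp ‖x‖
        + Real.exp ‖x‖ * ‖y‖ * (‖x‖ ^ 2 * Real.exp ‖x‖) := by
        refine norm_add₃_le.trans (add_le_add (add_le_add (norm_mul₃_le ..) ?_) ?_)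
        · exact norm_mul_le_of_le (norm_mul_le_of_le hr le_rfl) (norm_exp_le_exp_norm x)
        · exact norm_mul_le_of_le (norm_mul_le_of_le h1x le_rfl) hr
    _ ≤ 3 * ‖x‖ ^ 2 * ‖y‖ * Real.exp (2 * ‖x‖) := by
        rw [two_mul, Real.exp_add]
        nlinarith [mul_nonneg (sq_nonneg ‖x‖) (norm_nonneg y), one_le_mul_of_one_le_of_one_le hE hE]

theorem norm_exp_add_sub_exp_sub_le (x y : A) :
    ‖exp (x + y) - exp x - (y + (2 : ℚ)⁻¹ • (x * y + y * x))‖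
      ≤ ‖y‖ * ((‖x‖ + ‖y‖) ^ 2 * Real.exp (‖x‖ + ‖y‖) + ‖y‖) := by
  have hid : exp (x + y) - exp x - (y + (2 : ℚ)⁻¹ • (x * y + y * x))
      = (expTail 3 (x + y) - expTail 3 x) + (2 : ℚ)⁻¹ • y ^ 2 := by
    rw [exp_eq_one_add_add_half_sq_add_expTail_three (x + y),
      exp_eq_one_add_add_half_sq_add_expTail_three x]
    simp only [sq, add_mul, mul_add, smul_add]
    abel
  have hsq : ‖(2 : ℚ)⁻¹ • y ^ 2‖ ≤ ‖y‖ * ‖y‖ := by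
    have hhalf : ‖(2 : ℚ)⁻¹‖ = 2⁻¹ := by rw [← Rat.norm_cast_real]; norm_num
    rw [norm_smul, hhalf]
    nlinarith [norm_pow_le' y two_pos, norm_nonneg y]
  rw [hid]
  calc _ ≤ ‖y‖ * (‖x‖ + ‖y‖) ^ 2 * Real.exp (‖x‖ + ‖y‖) + ‖y‖ * ‖y‖ :=
        (norm_add_le _ _).trans (add_le_add (norm_expTail_add_sub_expTail_le 2 x y) hsq)
    _ = _ := by ring

theorem norm_exp_two_nsmul_add_sub_exp_mul_exp_mul_exp_le [NormOneClass A] (x y : A) :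
    ‖exp (2 • x + y) - exp x * exp y * exp x‖
      ≤ 2 * ‖y‖ * ((2 * ‖x‖ + ‖y‖) ^ 2 + ‖y‖) * Real.exp (2 * ‖x‖ + ‖y‖) := by
  set σ := 2 * ‖x‖ + ‖y‖
  set P₁ := exp (2 • x + y) - exp (2 • x) - (y + (2 : ℚ)⁻¹ • ((2 • x) * y + y * (2 • x)))
  set P₂ := exp x * expTail 2 y * exp x
  set P₃ := exp x * y * exp x - (y + x * y + y * x)
  have hsym : (2 : ℚ)⁻¹ • ((2 • x) * y + y * (2 • x)) = x * y + y * x := by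
    simp only [smul_mul_assoc, mul_smul_comm, ← smul_add]
    rw [← Nat.cast_smul_eq_nsmul ℚ, smul_smul]; norm_num
  have hid : exp (2 • x + y) - exp x * exp y * exp x = P₁ - P₂ - P₃ := by
    simp only [P₁, P₂, P₃]
    rw [hsym, exp_nsmul, exp_eq_one_add_add_expTail_two y]; noncomm_ring
  have hσ : ‖2 • x‖ + ‖y‖ ≤ σ := by
    have : ‖2 • x‖ ≤ (2 : ℕ) * ‖x‖ := norm_nsmul_le
    push_cast at this
    linarith
  have h₁ : ‖P₁‖ ≤ ‖y‖ * (σ ^ 2 * Real.exp σ + ‖y‖) :=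
    (norm_exp_add_sub_exp_sub_le (2 • x) y).trans (by gcongr)
  have h₂ : ‖P₂‖ ≤ ‖y‖ ^ 2 * Real.exp σ := by
    calc _ ≤ Real.exp ‖x‖ * (‖y‖ ^ 2 * Real.exp ‖y‖) * Real.exp ‖x‖ :=
          norm_mul_le_of_le (norm_mul_le_of_le (norm_exp_le_exp_norm x) (norm_expTail_le 2 y))
            (norm_exp_le_exp_norm x)
      _ = _ := by simp only [σ, two_mul, Real.exp_add]; ring
  have h₃ : ‖P₃‖ ≤ σ ^ 2 * ‖y‖ * Real.exp σ :=
    (norm_exp_mul_mul_exp_sub_le x y).trans (by gcongr <;> nlinarith [norm_nonneg x, norm_nonneg y])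
  have hE : 1 ≤ Real.exp σ := Real.one_le_exp (by positivity)
  calc _ = ‖P₁ - P₂ - P₃‖ := by rw [hid]
    _ ≤ ‖P₁‖ + ‖P₂‖ + ‖P₃‖ := (norm_sub_le _ _).trans (by gcongr; exact norm_sub_le _ _)
    _ ≤ _ := by nlinarith [mul_le_mul_of_nonneg_left hE (sq_nonneg ‖y‖)]

end NormedSpace

/-- **Fourth-order splitting of a modified matrix exponential**: for complex
`M × M` matrices `B, C` there are `K ≥ 0` and `δ > 0` such that for `|τ| ≤ δ`,
`‖exp(τ(B + τ²C)) − exp(τB/2) exp(τ³C) exp(τB/2)‖ ≤ K|τ|⁵`. -/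
theorem fourth_order_splitting_modified_exponential (M : ℕ) (hM : 1 ≤ M)
    (B C : Matrix (Fin M) (Fin M) ℂ) :
    ∃ K : ℝ, 0 ≤ K ∧ ∃ δ : ℝ, 0 < δ ∧ ∀ τ : ℝ, |τ| ≤ δ →
      ‖exp ((τ : ℂ) • (B + (τ : ℂ) ^ 2 • C))
        - exp (((τ : ℂ) / 2) • B) * exp (((τ : ℂ) ^ 3) • C)
          * exp (((τ : ℂ) / 2) • B)‖ ≤ K * |τ| ^ 5 := by
  -- the `L∞` operator norm is a `NormOneClass` only on a nonempty index type
  have : Nonempty (Fin M) := ⟨⟨0, hM⟩⟩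
  set L := ‖B‖ + ‖C‖
  refine ⟨2 * ‖C‖ * (L ^ 2 + ‖C‖) * Real.exp L, by positivity, 1, one_pos, fun τ hτ ↦ ?_⟩
  have harg : (τ : ℂ) • (B + (τ : ℂ) ^ 2 • C) = 2 • (((τ : ℂ) / 2) • B) + (τ : ℂ) ^ 3 • C := by
    module
  have hx : 2 * ‖((τ : ℂ) / 2) • B‖ = |τ| * ‖B‖ := by simp [norm_smul]; ring
  have hy : ‖(τ : ℂ) ^ 3 • C‖ = |τ| ^ 3 * ‖C‖ := by simp [norm_smul]
  rw [harg]
  refine (norm_exp_two_nsmul_add_sub_exp_mul_exp_mul_exp_le _ _).trans ?_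
  rw [hx, hy]
  have hr : 0 ≤ |τ| := abs_nonneg τ
  have hr3 : |τ| ^ 3 ≤ |τ| ^ 2 := pow_le_pow_of_le_one hr hτ (by norm_num)
  have hσ : |τ| * ‖B‖ + |τ| ^ 3 * ‖C‖ ≤ |τ| * L := by
    nlinarith [pow_le_pow_of_le_one hr hτ (show 1 ≤ 3 by norm_num), norm_nonneg C]
  calc _ ≤ 2 * (|τ| ^ 3 * ‖C‖) * (|τ| ^ 2 * (L ^ 2 + ‖C‖)) * Real.exp L := by
        gcongr
        · have hsq := pow_le_pow_left₀ (by positivity) hσ 2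
          rw [mul_pow] at hsq
          nlinarith [mul_le_mul_of_nonneg_right hr3 (norm_nonneg C)]
        · nlinarith [norm_nonneg B, norm_nonneg C]
    _ = _ := by ring
end

section
/- Taylor expansion of the complex cubic flow: Let b ∈ ℂ, u₀ ∈ ℂ, δ > 0, and let u : (−δ, δ) → ℂ be five times continuously differentiable with u(0) = u₀ and u′(t) = b |u(t)|² u(t) for all t ∈ (−δ, δ). Then there exist K ≥ 0 and δ′ ∈ (0, δ] such that for all τ with |τ| ≤ δ′, | u(τ) − ( 1 + b τ |u₀|² + (b² + (1/2)|b|²) τ² |u₀|⁴ + (b³ + ((7/6) b + (1/3) b̄)|b|²) τ³ |u₀|⁶ + (b⁴ + (1/24)(46 b² + 6 b̄² + 29 |b|²)|b|²) τ⁴ |u₀|⁸ ) u₀ | ≤ K |τ|⁵. -/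
/-!
Along a solution of `u' = b |u|² u` the monomials `mₖ = u^(k+1) ū^k` satisfy
`mₖ' = ((k+1) b + k b̄) mₖ₊₁`, so `u^(k) = cₖ mₖ` with `cₖ = ∏_{j<k} ((j+1) b + j b̄)`, and the
Taylor polynomial of order 4 at `0` is `∑_{k<5} cₖ τ^k |u₀|^(2k) u₀ / k!`. The remainder is `O(τ⁵)`
by five applications of the mean value inequality, starting from a bound on `m₅` on a compact
interval.
-/

open Set Finset ComplexConjugate
open scoped Nat

section TaylorChain

variable {E : Type*} [NormedAddCommGroup E] [NormedSpace ℝ E]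

theorem norm_le_mul_abs_pow_succ_of_hasDerivAt {F F' : ℝ → E} {a C : ℝ} {n : ℕ} (hC : 0 ≤ C)
    (hF : ∀ t ∈ Icc (-a) a, HasDerivAt F (F' t) t) (hF0 : F 0 = 0)
    (hF' : ∀ t ∈ Icc (-a) a, ‖F' t‖ ≤ C * |t| ^ n) {t : ℝ} (ht : t ∈ Icc (-a) a) :
    ‖F t‖ ≤ C * |t| ^ (n + 1) := by
  have h0 : (0 : ℝ) ∈ Icc (-a) a := ⟨by linarith [ht.1, ht.2], by linarith [ht.1, ht.2]⟩
  have hsub : uIcc 0 t ⊆ Icc (-a) a := uIcc_subset_Icc h0 ht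
  have habs : ∀ x ∈ uIcc 0 t, |x| ≤ |t| := fun x hx => by
    simpa using abs_sub_left_of_mem_uIcc hx
  have key := (convex_uIcc (0 : ℝ) t).norm_image_sub_le_of_norm_hasDerivWithin_le
    (fun x hx => (hF x (hsub hx)).hasDerivWithinAt)
    (fun x hx => (hF' x (hsub hx)).trans
      (mul_le_mul_of_nonneg_left (pow_le_pow_left₀ (abs_nonneg x) (habs x hx) n) hC))
    left_mem_uIcc right_mem_uIcc
  rw [hF0, sub_zero, sub_zero, Real.norm_eq_abs] at key
  rwa [pow_succ, ← mul_assoc]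

theorem hasDerivAt_pow_succ_div_factorial_smul (k : ℕ) (v : E) (t : ℝ) :
    HasDerivAt (fun y : ℝ => (y ^ (k + 1) / (k + 1)! : ℝ) • v) ((t ^ k / k ! : ℝ) • v) t := by
  convert ((hasDerivAt_pow (k + 1) t).div_const ((k + 1)! : ℝ)).smul_const v using 2
  rw [Nat.factorial_succ]
  push_cast
  field_simp

theorem norm_sub_sum_taylor_le_of_hasDerivAt {a M : ℝ} (n : ℕ) {f : ℕ → ℝ → E}
    (hf : ∀ k < n, ∀ t ∈ Icc (-a) a, HasDerivAt (f k) (f (k + 1) t) t)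
    (hM : ∀ t ∈ Icc (-a) a, ‖f n t‖ ≤ M) :
    ∀ t ∈ Icc (-a) a, ‖f 0 t - ∑ k ∈ range n, (t ^ k / k ! : ℝ) • f k 0‖ ≤ M * |t| ^ n := by
  induction n generalizing f with
  | zero => simpa using hM
  | succ n ih =>
    intro t ht
    have hM0 : 0 ≤ M := (norm_nonneg _).trans
      (hM 0 ⟨by linarith [ht.1, ht.2], by linarith [ht.1, ht.2]⟩)
    have hderiv := ih (f := fun k => f (k + 1)) (fun k hk => hf (k + 1) (by omega)) hM
    refine norm_le_mul_abs_pow_succ_of_hasDerivAt (F := fun y =>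
      f 0 y - ∑ k ∈ range (n + 1), (y ^ k / k ! : ℝ) • f k 0) hM0 (fun y hy => ?_) ?_ hderiv ht
    · simp only [sum_range_succ', pow_zero, Nat.factorial_zero, Nat.cast_one, div_one, one_smul]
      refine ((hf 0 n.succ_pos y hy).fun_sub ((HasDerivAt.fun_sum fun k _ =>
        hasDerivAt_pow_succ_div_factorial_smul k (f (k + 1) 0) y).add_const _)).congr_deriv ?_
      simp
    · simp [sum_range_succ']

theorem exists_norm_sub_sum_taylor_le_of_hasDerivAt {a : ℝ} (ha : 0 ≤ a) (n : ℕ)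
    {f : ℕ → ℝ → E} (hf : ∀ k ≤ n, ∀ t ∈ Icc (-a) a, HasDerivAt (f k) (f (k + 1) t) t) :
    ∃ M, 0 ≤ M ∧ ∀ t ∈ Icc (-a) a,
      ‖f 0 t - ∑ k ∈ range n, (t ^ k / k ! : ℝ) • f k 0‖ ≤ M * |t| ^ n := by
  have hcont : ContinuousOn (f n) (Icc (-a) a) := fun t ht =>
    (hf n le_rfl t ht).continuousAt.continuousWithinAt
  obtain ⟨M, hM⟩ := isCompact_Icc.exists_bound_of_continuousOn hcont
  exact ⟨M, (norm_nonneg _).trans (hM 0 ⟨by linarith, ha⟩),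
    norm_sub_sum_taylor_le_of_hasDerivAt n (fun k hk => hf k hk.le) hM⟩

end TaylorChain

noncomputable def cubicFlowCoeff (b : ℂ) (k : ℕ) : ℂ :=
  ∏ j ∈ range k, ((j + 1) * b + j * conj b)

theorem hasDerivAt_cubicFlowCoeff_mul_pow_mul_conj_pow {b : ℂ} {u : ℝ → ℂ} {t : ℝ}
    (hu : HasDerivAt u (b * (Complex.normSq (u t) : ℂ) * u t) t) (k : ℕ) :
    HasDerivAt (fun y => cubicFlowCoeff b k * (u y ^ (k + 1) * conj (u y) ^ k))
      (cubicFlowCoeff b (k + 1) * (u t ^ (k + 2) * conj (u t) ^ (k + 1))) t := by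
  have hconj : HasDerivAt (fun y => conj (u y)) (conj (b * (Complex.normSq (u t) : ℂ) * u t)) t :=
    hu.star
  refine (((hu.fun_pow (k + 1)).mul (hconj.fun_pow k)).const_mul _).congr_deriv ?_
  simp only [cubicFlowCoeff, prod_range_succ, ← Complex.mul_conj, map_mul, Complex.conj_conj]
  cases k with
  | zero => ring
  | succ k =>
    simp only [Nat.add_sub_cancel]
    push_cast
    ring

theorem taylor_expansion_complex_cubic_flow_general (b : ℂ) (u₀ : ℂ) (δ : ℝ) (hδ : 0 < δ)
    (u : ℝ → ℂ)
    (h0 : u 0 = u₀)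
    (hode : ∀ t ∈ Set.Ioo (-δ) δ,
      HasDerivAt u (b * (Complex.normSq (u t) : ℂ) * u t) t) :
    ∃ K : ℝ, 0 ≤ K ∧ ∃ δ' ∈ Set.Ioc (0 : ℝ) δ, ∀ τ : ℝ, |τ| ≤ δ' →
      ‖u τ -
        (1 + b * (τ : ℂ) * (Complex.normSq u₀ : ℂ)
          + (b ^ 2 + (1 / 2) * (Complex.normSq b : ℂ)) * (τ : ℂ) ^ 2
              * (Complex.normSq u₀ : ℂ) ^ 2
          + (b ^ 3 + ((7 / 6) * b + (1 / 3) * (starRingEnd ℂ) b)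
                * (Complex.normSq b : ℂ)) * (τ : ℂ) ^ 3 * (Complex.normSq u₀ : ℂ) ^ 3
          + (b ^ 4 + (1 / 24) * (46 * b ^ 2 + 6 * ((starRingEnd ℂ) b) ^ 2
                + 29 * (Complex.normSq b : ℂ)) * (Complex.normSq b : ℂ))
              * (τ : ℂ) ^ 4 * (Complex.normSq u₀ : ℂ) ^ 4) * u₀‖
        ≤ K * |τ| ^ 5 := by
  have hsub : Icc (-(δ / 2)) (δ / 2) ⊆ Ioo (-δ) δ :=
    Icc_subset_Ioo (by linarith) (by linarith)
  obtain ⟨M, hM0, hM⟩ := exists_norm_sub_sum_taylor_le_of_hasDerivAt (by linarith) 5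
    (f := fun k t => cubicFlowCoeff b k * (u t ^ (k + 1) * conj (u t) ^ k))
    fun k _ t ht => hasDerivAt_cubicFlowCoeff_mul_pow_mul_conj_pow (hode t (hsub ht)) k
  refine ⟨M, hM0, δ / 2, ⟨by linarith, by linarith⟩, fun τ hτ => ?_⟩
  refine le_of_eq_of_le (congrArg norm ?_) (hM τ (abs_le.1 hτ))
  subst h0
  simp only [sum_range_succ, sum_range_zero, cubicFlowCoeff, prod_range_succ, prod_range_zero,
    Complex.real_smul, ← Complex.mul_conj]
  push_cast [Nat.factorial]
  ring

/-- **Taylor expansion of the complex cubic flow**: if `u` is `C⁵` on `(−δ, δ)`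
with `u(0) = u₀` and `u′ = b|u|²u`, then
`u(τ) = (1 + bτ|u₀|² + (b² + |b|²/2)τ²|u₀|⁴ + (b³ + ((7/6)b + (1/3)b̄)|b|²)τ³|u₀|⁶
  + (b⁴ + (1/24)(46b² + 6b̄² + 29|b|²)|b|²)τ⁴|u₀|⁸)u₀ + O(τ⁵)`. -/
theorem taylor_expansion_complex_cubic_flow (b : ℂ) (u₀ : ℂ) (δ : ℝ) (hδ : 0 < δ)
    (u : ℝ → ℂ) (hu : ContDiffOn ℝ 5 u (Set.Ioo (-δ) δ))
    (h0 : u 0 = u₀)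
    (hode : ∀ t ∈ Set.Ioo (-δ) δ,
      HasDerivAt u (b * (Complex.normSq (u t) : ℂ) * u t) t) :
    ∃ K : ℝ, 0 ≤ K ∧ ∃ δ' ∈ Set.Ioc (0 : ℝ) δ, ∀ τ : ℝ, |τ| ≤ δ' →
      ‖u τ -
        (1 + b * (τ : ℂ) * (Complex.normSq u₀ : ℂ)
          + (b ^ 2 + (1 / 2) * (Complex.normSq b : ℂ)) * (τ : ℂ) ^ 2
              * (Complex.normSq u₀ : ℂ) ^ 2
          + (b ^ 3 + ((7 / 6) * b + (1 / 3) * (starRingEnd ℂ) b)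
                * (Complex.normSq b : ℂ)) * (τ : ℂ) ^ 3 * (Complex.normSq u₀ : ℂ) ^ 3
          + (b ^ 4 + (1 / 24) * (46 * b ^ 2 + 6 * ((starRingEnd ℂ) b) ^ 2
                + 29 * (Complex.normSq b : ℂ)) * (Complex.normSq b : ℂ))
              * (τ : ℂ) ^ 4 * (Complex.normSq u₀ : ℂ) ^ 4) * u₀‖
        ≤ K * |τ| ^ 5 :=
  taylor_expansion_complex_cubic_flow_general b u₀ δ hδ u h0 hode
end
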